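/- arXiv:1410.2207 — 2 statements merged into one kernel-verified Lean document; each statement's English description precedes it below -/
import Mathlib

section
/- Let F : ℝ^n × [0,T] → CC(ℝ^n) satisfy hypotheses (H1) and (H3) relative to an open set U ⊂ ℝ^n and a constant m_F > 0, and let x̃ : [0,T] → ℝ^n with x̃(t) ∈ U for all t. For each k let h_k := T/k, t_j := j·h_k, and let x^k : [0,T] → ℝ^n be the piecewise linear function with x^k(0) = x₀ whose nodes satisfy the implicit Euler inclusions (x^k(t_j) − x^k(t_{j−1}))/h_k ∈ F(x^k(t_j), t_j) for j = 1, …, k. Suppose x^k → x̃ uniformly on [0,T] and the derivatives ẋ^k converge weakly in L²([0,T];ℝ^n) to a function v. Then x̃(t) = x₀ + ∫₀^t v(s) ds for all t ∈ [0,T], and x̃ is a trajectory of the differential inclusion: ẋ̃(t) = v(t) ∈ F(x̃(t), t) for a.e. t ∈ [0,T]. -/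
open scoped Pointwise RealInnerProductSpace
open Metric MeasureTheory Filter Set
open scoped Topology

noncomputable section

/-- The piecewise constant discrete velocity `(z_{j+1} - z_j)/h_k` on `(t_j, t_{j+1}]`,
that is, the a.e. derivative of the piecewise linear extension. -/
def vstepExt {n : ℕ} (T : ℝ) (k : ℕ) (z : ℕ → EuclideanSpace ℝ (Fin n)) :
    ℝ → EuclideanSpace ℝ (Fin n) := fun t =>
  (T / k)⁻¹ • (z ((⌈t / (T / k)⌉ - 1).toNat + 1) - z ((⌈t / (T / k)⌉ - 1).toNat))

/-- The piecewise linear extension of a discrete trajectory on the uniform grid. -/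
def plinExt {n : ℕ} (T : ℝ) (k : ℕ) (z : ℕ → EuclideanSpace ℝ (Fin n)) :
    ℝ → EuclideanSpace ℝ (Fin n) := fun t =>
  z (⌊t / (T / k)⌋.toNat) +
    ((t - (⌊t / (T / k)⌋.toNat : ℝ) * (T / k)) / (T / k)) •
      (z (⌊t / (T / k)⌋.toNat + 1) - z (⌊t / (T / k)⌋.toNat))

lemma vstep_eq_of_mem {n : ℕ} {T : ℝ} {k : ℕ} (hh : 0 < T / k)
    (z : ℕ → EuclideanSpace ℝ (Fin n)) {j : ℕ} {s : ℝ}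
    (h1 : (j : ℝ) * (T / k) < s) (h2 : s ≤ ((j : ℝ) + 1) * (T / k)) :
    vstepExt T k z s = (T / k)⁻¹ • (z (j + 1) - z j) := by
  have hceil : ⌈s / (T / k)⌉ = (j : ℤ) + 1 := by
    rw [Int.ceil_eq_iff]
    constructor
    · push_cast
      rw [lt_div_iff₀ hh]
      linarith
    · rw [div_le_iff₀ hh]
      push_cast
      linarith
  simp only [vstepExt, hceil, add_sub_cancel_right, Int.toNat_natCast]

lemma plin_node {n : ℕ} {T : ℝ} {k : ℕ} (hh : 0 < T / k)
    (z : ℕ → EuclideanSpace ℝ (Fin n)) (j : ℕ) :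
    plinExt T k z ((j : ℝ) * (T / k)) = z j := by
  have hd : (j : ℝ) * (T / k) / (T / k) = (j : ℝ) := mul_div_cancel_right₀ _ hh.ne'
  simp [plinExt, hd]

lemma vstep_measurable {n : ℕ} (T : ℝ) (k : ℕ) (z : ℕ → EuclideanSpace ℝ (Fin n)) :
    Measurable (vstepExt T k z) := by
  have h1 : Measurable fun s : ℝ => ⌈s / (T / k)⌉ :=
    Int.measurable_ceil.comp (measurable_id.div_const _)
  exact (measurable_from_top
    (f := fun m : ℤ => (T / k)⁻¹ • (z ((m - 1).toNat + 1) - z ((m - 1).toNat)))).comp h1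

lemma vstep_piece {n : ℕ} {T : ℝ} {k : ℕ} (hh : 0 < T / k)
    (z : ℕ → EuclideanSpace ℝ (Fin n)) (j : ℕ) {a b : ℝ}
    (hja : (j : ℝ) * (T / k) ≤ a) (hab : a ≤ b) (hb : b ≤ ((j : ℝ) + 1) * (T / k)) :
    IntervalIntegrable (vstepExt T k z) volume a b ∧
      ∫ s in a..b, vstepExt T k z s = (b - a) • ((T / k)⁻¹ • (z (j + 1) - z j)) := by
  have heq : EqOn (vstepExt T k z) (fun _ => (T / k)⁻¹ • (z (j + 1) - z j)) (Ioc a b) :=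
    fun s hs => vstep_eq_of_mem hh z (lt_of_le_of_lt hja hs.1) (hs.2.trans hb)
  constructor
  · rw [intervalIntegrable_iff_integrableOn_Ioc_of_le hab]
    exact (integrableOn_const measure_Ioc_lt_top.ne).congr_fun heq.symm measurableSet_Ioc
  · rw [intervalIntegral.integral_of_le hab, setIntegral_congr_fun measurableSet_Ioc heq,
      setIntegral_const, measureReal_def, Real.volume_Ioc, ENNReal.toReal_ofReal (by linarith)]

lemma vstep_node_integral {n : ℕ} {T : ℝ} {k : ℕ} (hh : 0 < T / k)
    (z : ℕ → EuclideanSpace ℝ (Fin n)) :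
    ∀ j : ℕ, IntervalIntegrable (vstepExt T k z) volume 0 ((j : ℝ) * (T / k)) ∧
      ∫ s in (0:ℝ)..((j : ℝ) * (T / k)), vstepExt T k z s = z j - z 0 := by
  intro j
  induction j with
  | zero =>
    constructor
    · simpa using (IntervalIntegrable.refl (f := vstepExt T k z) (μ := volume) (a := 0))
    · simp
  | succ j ih =>
    have hle : (j : ℝ) * (T / k) ≤ ((j : ℝ) + 1) * (T / k) := by nlinarith
    have hp := vstep_piece hh z j le_rfl hle le_rfl
    have hii := ih.1.trans hp.1
    constructor
    · push_cast
      exact hii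
    · have hadd := intervalIntegral.integral_add_adjacent_intervals ih.1 hp.1
      push_cast
      rw [← hadd, ih.2, hp.2]
      have harith : ((j : ℝ) + 1) * (T / k) - (j : ℝ) * (T / k) = T / k := by ring
      rw [harith, smul_smul, mul_inv_cancel₀ hh.ne', one_smul]
      abel

lemma vstep_integral_eq_plin {n : ℕ} {T : ℝ} {k : ℕ} (hT : 0 < T) (hk : 1 ≤ k)
    (z : ℕ → EuclideanSpace ℝ (Fin n)) {t : ℝ} (ht : t ∈ Icc 0 T) :
    IntervalIntegrable (vstepExt T k z) volume 0 t ∧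
      ∫ s in (0:ℝ)..t, vstepExt T k z s = plinExt T k z t - z 0 := by
  have hk0 : (0:ℝ) < k := by exact_mod_cast hk
  have hh : 0 < T / k := div_pos hT hk0
  set j : ℕ := ⌊t / (T / k)⌋.toNat with hj
  have ht0 : 0 ≤ t := ht.1
  have hfl : ⌊t / (T / k)⌋ = (j : ℤ) := by
    rw [hj, Int.toNat_of_nonneg (Int.floor_nonneg.2 (div_nonneg ht0 hh.le))]
  have h1 : (j : ℝ) * (T / k) ≤ t := by
    have h := Int.floor_le (t / (T / k))
    rw [hfl] at h
    push_cast at h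
    calc (j : ℝ) * (T / k) ≤ t / (T / k) * (T / k) := by nlinarith
    _ = t := div_mul_cancel₀ _ hh.ne'
  have h2 : t ≤ ((j : ℝ) + 1) * (T / k) := by
    have h := Int.lt_floor_add_one (t / (T / k))
    rw [hfl] at h
    push_cast at h
    have h' := (div_lt_iff₀ hh).1 h
    linarith
  have hnode := vstep_node_integral hh z j
  have hp := vstep_piece hh z j le_rfl h1 h2
  refine ⟨hnode.1.trans hp.1, ?_⟩
  rw [← intervalIntegral.integral_add_adjacent_intervals hnode.1 hp.1, hnode.2, hp.2]
  show _ = plinExt T k z t - z 0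
  simp only [plinExt, ← hj]
  simp only [div_eq_mul_inv, mul_smul]
  abel

lemma interval_inner_indicator {n : ℕ} {T : ℝ} (hT : 0 ≤ T) {A : Set ℝ}
    (hA : MeasurableSet A) (hAsub : A ⊆ Ioc 0 T) (f : ℝ → EuclideanSpace ℝ (Fin n))
    (hf : IntegrableOn f A volume) (u : EuclideanSpace ℝ (Fin n)) :
    ∫ s in (0:ℝ)..T, ⟪f s, A.indicator (fun _ => u) s⟫ = ⟪∫ s in A, f s, u⟫ := by
  rw [intervalIntegral.integral_of_le hT]
  have h1 : ∀ s, ⟪f s, A.indicator (fun _ => u) s⟫ = A.indicator (fun s => ⟪f s, u⟫) s := by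
    intro s
    by_cases hs : s ∈ A <;>
      simp [hs, Set.indicator_of_mem, Set.indicator_of_notMem]
  simp_rw [h1]
  rw [setIntegral_indicator hA, inter_eq_self_of_subset_right hAsub]
  calc ∫ s in A, ⟪f s, u⟫ = ∫ s in A, ⟪u, f s⟫ := by simp_rw [real_inner_comm]
  _ = ⟪u, ∫ s in A, f s⟫ := integral_inner hf u
  _ = ⟪∫ s in A, f s, u⟫ := real_inner_comm _ _

set_option maxHeartbeats 2000000 in
/-- the closure (limiting feasibility) step: a uniform limit of implicit
Euler discrete trajectories whose derivatives converge weakly in `L²` is a trajectory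
of the convex-valued differential inclusion. -/
theorem implicit_euler_limit_is_trajectory
    (n : ℕ) (T : ℝ) (hT : 0 < T) (x₀ : EuclideanSpace ℝ (Fin n))
    (F : EuclideanSpace ℝ (Fin n) → ℝ → Set (EuclideanSpace ℝ (Fin n)))
    (hFne : ∀ x t, (F x t).Nonempty) (hFconv : ∀ x t, Convex ℝ (F x t))
    (hFcpt : ∀ x t, IsCompact (F x t))
    (U : Set (EuclideanSpace ℝ (Fin n))) (hU : IsOpen U) (mF : ℝ) (hmF : 0 < mF)
    -- (H1) uniform boundedness
    (hFbd : ∀ᵐ t ∂(volume.restrict (Icc (0 : ℝ) T)), ∀ x ∈ U, F x t ⊆ closedBall 0 mF)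
    -- (H3) continuity in x for a.e. t, and a.e. continuity in t uniform in x ∈ U
    (hFxCont : ∀ᵐ t ∂(volume.restrict (Icc (0 : ℝ) T)), ∀ x ∈ U, ∀ ε > (0 : ℝ), ∃ δ > (0 : ℝ),
      ∀ x' ∈ U, ‖x' - x‖ < δ → hausdorffDist (F x' t) (F x t) < ε)
    (hFtCont : ∃ N : Set ℝ, volume N = 0 ∧ ∀ t ∈ Icc (0 : ℝ) T \ N, ∀ ε > (0 : ℝ),
      ∃ δ > (0 : ℝ), ∀ t' ∈ Icc (0 : ℝ) T, |t' - t| < δ → ∀ x ∈ U,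
        hausdorffDist (F x t') (F x t) < ε)
    -- the limit candidate, with values in U
    (xt : ℝ → EuclideanSpace ℝ (Fin n)) (hxtU : ∀ t ∈ Icc (0 : ℝ) T, xt t ∈ U)
    -- the implicit Euler discrete trajectories
    (x : ℕ → ℕ → EuclideanSpace ℝ (Fin n))
    (hx0 : ∀ k : ℕ, x k 0 = x₀)
    (hincl : ∀ k : ℕ, 1 ≤ k → ∀ j : ℕ, 1 ≤ j → j ≤ k →
      (T / k)⁻¹ • (x k j - x k (j - 1)) ∈ F (x k j) ((j : ℝ) * (T / k)))
    -- uniform convergence of the piecewise linear extensions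
    (hunif : TendstoUniformlyOn (fun k => plinExt T k (x k)) xt atTop (Icc (0 : ℝ) T))
    -- weak L² convergence of the derivatives to v
    (v : ℝ → EuclideanSpace ℝ (Fin n))
    (hv : MemLp v 2 (volume.restrict (Icc (0 : ℝ) T)))
    (hweak : ∀ g : ℝ → EuclideanSpace ℝ (Fin n), MemLp g 2 (volume.restrict (Icc (0 : ℝ) T)) →
      Tendsto (fun k => ∫ t in (0 : ℝ)..T, ⟪vstepExt T k (x k) t, g t⟫) atTop
        (nhds (∫ t in (0 : ℝ)..T, ⟪v t, g t⟫))) :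
    (∀ t ∈ Icc (0 : ℝ) T, xt t = x₀ + ∫ s in (0 : ℝ)..t, v s) ∧
      ∀ᵐ t ∂(volume.restrict (Icc (0 : ℝ) T)), v t ∈ F (xt t) t := by
  have hvint : IntegrableOn v (Icc (0 : ℝ) T) volume := by
    have hfin : Fact (volume (Icc (0 : ℝ) T) < ⊤) :=
      ⟨by rw [Real.volume_Icc]; exact ENNReal.ofReal_lt_top⟩
    exact hv.integrable one_le_two
  -- Part 1
  have part1 : ∀ t ∈ Icc (0 : ℝ) T, xt t = x₀ + ∫ s in (0 : ℝ)..t, v s := by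
    intro t ht
    have ht0 : 0 ≤ t := ht.1
    have hAsub : Ioc (0 : ℝ) t ⊆ Ioc 0 T := Ioc_subset_Ioc_right ht.2
    have hveq : ∀ u : EuclideanSpace ℝ (Fin n),
        ⟪xt t - x₀, u⟫ = ⟪∫ s in Ioc (0 : ℝ) t, v s, u⟫ := by
      intro u
      set g : ℝ → EuclideanSpace ℝ (Fin n) := (Ioc (0 : ℝ) t).indicator (fun _ => u) with hg
      have hgmem : MemLp g 2 (volume.restrict (Icc (0 : ℝ) T)) :=
        (memLp_const u).indicator measurableSet_Ioc
      have hlim := hweak g hgmem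
      have hrhs : ∫ s in (0 : ℝ)..T, ⟪v s, g s⟫ = ⟪∫ s in Ioc (0 : ℝ) t, v s, u⟫ :=
        interval_inner_indicator hT.le measurableSet_Ioc hAsub v
          (hvint.mono_set (hAsub.trans Ioc_subset_Icc_self)) u
      have hev : (fun k => ∫ s in (0 : ℝ)..T, ⟪vstepExt T k (x k) s, g s⟫) =ᶠ[atTop]
          fun k => ⟪plinExt T k (x k) t - x₀, u⟫ := by
        filter_upwards [eventually_ge_atTop 1] with k hk
        have hft := vstep_integral_eq_plin hT hk (x k) ht
        have hii : IntegrableOn (vstepExt T k (x k)) (Ioc 0 t) volume :=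
          (intervalIntegrable_iff_integrableOn_Ioc_of_le ht0).1 hft.1
        rw [interval_inner_indicator hT.le measurableSet_Ioc hAsub _ hii u]
        congr 1
        rw [← intervalIntegral.integral_of_le ht0, hft.2, hx0 k]
      rw [hrhs] at hlim
      have t2 := hlim.congr' hev
      have t1 : Tendsto (fun k => ⟪plinExt T k (x k) t - x₀, u⟫) atTop
          (nhds ⟪xt t - x₀, u⟫) :=
        ((hunif.tendsto_at ht).sub tendsto_const_nhds).inner tendsto_const_nhds
      exact tendsto_nhds_unique t1 t2
    have h := ext_inner_right ℝ hveq
    rw [sub_eq_iff_eq_add] at h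
    rw [h, add_comm, intervalIntegral.integral_of_le ht0]
  refine ⟨part1, ?_⟩

  -- Part 2
  have hxtC : ContinuousOn xt (Icc (0 : ℝ) T) := by
    have hc : ContinuousOn (fun t => x₀ + ∫ s in Ioc (0 : ℝ) t, v s) (Icc (0 : ℝ) T) :=
      continuousOn_const.add (intervalIntegral.continuousOn_primitive hvint)
    exact hc.congr fun t ht => by
      rw [part1 t ht, intervalIntegral.integral_of_le ht.1]
  set w : ℝ → EuclideanSpace ℝ (Fin n) := (Icc (0 : ℝ) T).indicator v with hwdef
  have hwint : Integrable w volume := (integrable_indicator_iff measurableSet_Icc).2 hvint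
  have hleb : ∀ᵐ t ∂(volume : Measure ℝ),
      Tendsto (fun r => ⨍ y in closedBall t r, w y) (𝓝[>] 0) (𝓝 (w t)) := by
    filter_upwards [IsUnifLocDoublingMeasure.ae_tendsto_average
      (μ := (volume : Measure ℝ)) hwint.locallyIntegrable 1] with t ht
    refine ht (fun _ => t) id tendsto_id ?_
    filter_upwards [self_mem_nhdsWithin] with r (hr : r ∈ Ioi (0:ℝ))
    exact mem_closedBall_self (by simpa using le_of_lt hr)
  obtain ⟨N, hNvol, hNprop⟩ := hFtCont
  have hae1 : ∀ᵐ t ∂(volume.restrict (Icc (0 : ℝ) T)), t ∈ Icc (0 : ℝ) T :=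
    ae_restrict_mem measurableSet_Icc
  have hae2 : ∀ᵐ t ∂(volume.restrict (Icc (0 : ℝ) T)), t ∉ N := by
    have hz : volume.restrict (Icc (0 : ℝ) T) N = 0 :=
      le_antisymm (le_trans (Measure.restrict_apply_le _ _) hNvol.le) zero_le
    exact measure_eq_zero_iff_ae_notMem.1 hz
  have hae3 : ∀ᵐ t ∂(volume.restrict (Icc (0 : ℝ) T)), t ∉ ({0, T} : Set ℝ) := by
    have hz : volume.restrict (Icc (0 : ℝ) T) ({0, T} : Set ℝ) = 0 := by
      refine le_antisymm (le_trans (Measure.restrict_apply_le _ _) ?_) zero_le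
      exact ((Set.finite_singleton T).insert 0).measure_zero volume |>.le
    exact measure_eq_zero_iff_ae_notMem.1 hz
  have hae4 : ∀ᵐ t ∂(volume.restrict (Icc (0 : ℝ) T)),
      Tendsto (fun r => ⨍ y in closedBall t r, w y) (𝓝[>] 0) (𝓝 (w t)) :=
    ae_restrict_of_ae hleb
  filter_upwards [hae1, hae2, hae3, hae4, hFxCont] with t htIcc htN ht0T hlebt hx
  have hne : ¬(t = 0 ∨ t = T) := by simpa using ht0T
  have htIoo : t ∈ Ioo (0 : ℝ) T :=
    ⟨htIcc.1.lt_of_ne (fun h => hne (Or.inl h.symm)),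
     htIcc.2.lt_of_ne (fun h => hne (Or.inr h))⟩
  have hwt : w t = v t := indicator_of_mem htIcc v
  rw [← hwt]
  set C := F (xt t) t with hC
  suffices hsuff : ∀ ε > (0:ℝ), w t ∈ cthickening ε C by
    have hcl : w t ∈ closure C := by
      rw [Metric.closure_eq_iInter_cthickening]
      exact mem_iInter₂.2 hsuff
    rwa [(hFcpt _ _).isClosed.closure_eq] at hcl
  intro ε hε
  set S := cthickening ε C with hS
  have hSclosed : IsClosed S := isClosed_cthickening
  have hSconv : Convex ℝ S := (hFconv _ _).cthickening ε
  have hSbd : Bornology.IsBounded S := (hFcpt (xt t) t).isBounded.cthickening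
  obtain ⟨R, hR⟩ := isBounded_iff_forall_norm_le.1 hSbd
  have hfin : ∀ (x1 : EuclideanSpace ℝ (Fin n)) (t1 : ℝ) (x2 : EuclideanSpace ℝ (Fin n)) (t2 : ℝ),
      EMetric.hausdorffEdist (F x1 t1) (F x2 t2) ≠ ⊤ := fun x1 t1 x2 t2 =>
    hausdorffEdist_ne_top_of_nonempty_of_bounded (hFne _ _) (hFne _ _)
      (hFcpt _ _).isBounded (hFcpt _ _).isBounded
  obtain ⟨δx0, hδx0, hδxball⟩ := Metric.isOpen_iff.1 hU (xt t) (hxtU t htIcc)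
  obtain ⟨δx1, hδx1, hδxprop⟩ := hx (xt t) (hxtU t htIcc) (ε/2) (by linarith)
  obtain ⟨δt, hδt, hδtprop⟩ := hNprop t ⟨htIcc, htN⟩ (ε/2) (by linarith)
  obtain ⟨δ3, hδ3, hδ3prop⟩ := Metric.continuousWithinAt_iff.1 (hxtC t htIcc)
      (min δx0 δx1 / 3) (by positivity)
  set r0 : ℝ := min (min (δt/2) (δ3/2)) (min (t/2) ((T-t)/2)) with hr0
  have hr0pos : 0 < r0 := by
    simp only [hr0, lt_min_iff]
    refine ⟨⟨by linarith, by linarith⟩, by linarith [htIoo.1], by linarith [htIoo.2]⟩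
  have hclaim : ∀ r : ℝ, 0 < r → r ≤ r0 → (⨍ y in closedBall t r, w y) ∈ S := by
    intro r hr hrr0
    have hb1 : r ≤ t/2 := le_trans hrr0 (le_trans (min_le_right _ _) (min_le_left _ _))
    have hb2 : r ≤ (T-t)/2 := le_trans hrr0 (le_trans (min_le_right _ _) (min_le_right _ _))
    have hrb : r ≤ min (δt/2) (δ3/2) := le_trans hrr0 (min_le_left _ _)
    have hball : closedBall t r = Icc (t - r) (t + r) := Real.closedBall_eq_Icc
    have hsubIoo : closedBall t r ⊆ Ioo 0 T := by
      rw [hball]; intro s hs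
      exact ⟨by linarith [hs.1, htIoo.1], by linarith [hs.2, htIoo.2]⟩
    have hsubIcc : closedBall t r ⊆ Icc 0 T := fun s hs => Ioo_subset_Icc_self (hsubIoo hs)
    have havg : (⨍ y in closedBall t r, w y) = ⨍ y in closedBall t r, v y := by
      rw [setAverage_eq, setAverage_eq, setIntegral_congr_fun measurableSet_closedBall
        (fun s hs => indicator_of_mem (hsubIcc hs) v)]
    rw [havg]
    have hvol : volume (closedBall t r) = ENNReal.ofReal (2*r) := Real.volume_closedBall t r
    have hvol0 : volume (closedBall t r) ≠ 0 := by
      rw [hvol]; simp only [ne_eq, ENNReal.ofReal_eq_zero, not_le]; linarith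
    have hvolT : volume (closedBall t r) ≠ ⊤ := by rw [hvol]; exact ENNReal.ofReal_ne_top
    set A : Set ℝ := Ioc (t - r) (t + r) with hA
    have hAsub : A ⊆ Ioc 0 T := fun s hs =>
      ⟨by linarith [hs.1, htIoo.1], by linarith [hs.2, htIoo.2]⟩
    have hrestr : volume.restrict A = volume.restrict (closedBall t r) := by
      rw [hball]; exact Measure.restrict_congr_set Ioc_ae_eq_Icc
    by_contra hp
    obtain ⟨f, u0, hfp, hfS⟩ := geometric_hahn_banach_point_closed hSconv hSclosed hp
    set wv : EuclideanSpace ℝ (Fin n) :=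
      (InnerProductSpace.toDual ℝ (EuclideanSpace ℝ (Fin n))).symm f with hwv
    have hfapp : ∀ y, ⟪wv, y⟫ = f y := fun y => InnerProductSpace.toDual_symm_apply
    have hhlim : Tendsto (fun k : ℕ => T / k) atTop (𝓝 0) :=
      tendsto_const_div_atTop_nhds_zero_nat T
    have hminpos : 0 < min (δt/2) (δ3/2) := lt_min (by linarith) (by linarith)
    have hev1 : ∀ᶠ k : ℕ in atTop, T / k < min (δt/2) (δ3/2) := by
      filter_upwards [hhlim.eventually (gt_mem_nhds hminpos)] with k hk using hk
    have hev2 : ∀ᶠ k : ℕ in atTop, ∀ s ∈ Icc (0:ℝ) T,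
        dist (xt s) (plinExt T k (x k) s) < min δx0 δx1 / 3 :=
      (Metric.tendstoUniformlyOn_iff.1 hunif) _ (by positivity)
    have hmem : ∀ᶠ k : ℕ in atTop, ∀ s ∈ closedBall t r, vstepExt T k (x k) s ∈ S := by
      filter_upwards [hev1, hev2, eventually_ge_atTop 1] with k hk1 hk2 hk3
      intro s hs
      have hk0 : (0:ℝ) < k := by exact_mod_cast hk3
      have hh : 0 < T / k := div_pos hT hk0
      have hsIoo : s ∈ Ioo (0:ℝ) T := hsubIoo hs
      set jz : ℤ := ⌈s / (T / k)⌉ with hjz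
      have hjz0 : 0 < jz := Int.ceil_pos.2 (div_pos hsIoo.1 hh)
      have hjzk : jz ≤ (k : ℤ) := by
        rw [hjz]
        refine Int.ceil_le.2 ?_
        push_cast
        rw [div_le_iff₀ hh]
        calc s ≤ T := hsIoo.2.le
        _ = (k:ℝ) * (T / k) := by field_simp
      set j : ℕ := jz.toNat with hjn
      have hjcast : (j : ℤ) = jz := Int.toNat_of_nonneg hjz0.le
      have hj1 : 1 ≤ j := by omega
      have hjk : j ≤ k := by omega
      have hjr : (j : ℝ) = (jz : ℝ) := by exact_mod_cast congrArg Int.cast hjcast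
      have hs2 : s ≤ (j:ℝ) * (T / k) := by
        have hle := Int.le_ceil (s / (T/k))
        rw [← hjz] at hle
        rw [hjr]
        calc s = s / (T/k) * (T/k) := (div_mul_cancel₀ _ hh.ne').symm
        _ ≤ (jz:ℝ) * (T/k) := by nlinarith [hle]
      have hs1 : ((j:ℝ) - 1) * (T / k) < s := by
        have hlt := Int.ceil_lt_add_one (s / (T/k))
        rw [← hjz] at hlt
        rw [hjr]
        have h' : (jz:ℝ) - 1 < s / (T/k) := by linarith
        nlinarith [(lt_div_iff₀ hh).1 h']
      have hj1' : ((j - 1 : ℕ) : ℝ) = (j:ℝ) - 1 := by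
        push_cast [hj1]
        ring
      have hveq2 : vstepExt T k (x k) s = (T / k)⁻¹ • (x k j - x k (j - 1)) := by
        have h := vstep_eq_of_mem hh (x k) (j := j - 1)
          (by rw [hj1']; linarith [hs1])
          (by rw [hj1', show (j:ℝ) - 1 + 1 = (j:ℝ) by ring]; exact hs2)
        have hj'' : j - 1 + 1 = j := by omega
        rw [h, hj'']
      have hmemF := hincl k hk3 j hj1 hjk
      rw [← hveq2] at hmemF
      set tj : ℝ := (j : ℝ) * (T / k) with htjd
      have htjIcc : tj ∈ Icc (0:ℝ) T := by
        constructor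
        · positivity
        · rw [htjd]
          calc (j:ℝ) * (T/k) ≤ (k:ℝ) * (T/k) := by
                apply mul_le_mul_of_nonneg_right _ hh.le; exact_mod_cast hjk
          _ = T := by field_simp
      have habs : |tj - t| < min δt δ3 := by
        have h3 : |s - t| ≤ r := by rwa [mem_closedBall, Real.dist_eq] at hs
        have h1 : tj - s < T / k := by rw [htjd]; nlinarith [hs1]
        have h2 : 0 ≤ tj - s := by rw [htjd]; linarith [hs2]
        have h4 : |tj - t| ≤ (tj - s) + |s - t| := by
          calc |tj - t| = |(tj - s) + (s - t)| := by ring_nf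
          _ ≤ |tj - s| + |s - t| := abs_add_le _ _
          _ = (tj - s) + |s - t| := by rw [abs_of_nonneg h2]
        have h5 : |tj - t| < min (δt/2) (δ3/2) + min (δt/2) (δ3/2) := by
          apply lt_of_le_of_lt h4
          have := hk1
          linarith
        rw [lt_min_iff]
        constructor <;>
          [linarith [min_le_left (δt/2) (δ3/2)]; linarith [min_le_right (δt/2) (δ3/2)]]
      have hxkj : x k j = plinExt T k (x k) tj := (plin_node hh (x k) j).symm
      have hd1 : dist (xt tj) (plinExt T k (x k) tj) < min δx0 δx1 / 3 := hk2 tj htjIcc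
      have hd2 : dist (xt tj) (xt t) < min δx0 δx1 / 3 :=
        hδ3prop htjIcc (by rw [Real.dist_eq]; exact habs.trans_le (min_le_right _ _))
      have hd3 : dist (x k j) (xt t) < min δx0 δx1 := by
        rw [hxkj]
        calc dist (plinExt T k (x k) tj) (xt t)
            ≤ dist (plinExt T k (x k) tj) (xt tj) + dist (xt tj) (xt t) := dist_triangle _ _ _
        _ < min δx0 δx1 / 3 + min δx0 δx1 / 3 := by
              rw [dist_comm]; exact add_lt_add hd1 hd2
        _ ≤ min δx0 δx1 := by
              have hpos : 0 < min δx0 δx1 := lt_min hδx0 hδx1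
              linarith
      have hxkjU : x k j ∈ U := hδxball (mem_ball.2 (hd3.trans_le (min_le_left _ _)))
      have hhd_time : hausdorffDist (F (x k j) tj) (F (x k j) t) < ε/2 :=
        hδtprop tj htjIcc (habs.trans_le (min_le_left _ _)) (x k j) hxkjU
      have hhd_space : hausdorffDist (F (x k j) t) C < ε/2 := by
        rw [hC]
        exact hδxprop (x k j) hxkjU
          (by rw [← dist_eq_norm]; exact hd3.trans_le (min_le_right _ _))
      obtain ⟨y1, hy1, hdy1⟩ := exists_dist_lt_of_hausdorffDist_lt hmemF hhd_time (hfin _ _ _ _)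
      obtain ⟨y2, hy2, hdy2⟩ := exists_dist_lt_of_hausdorffDist_lt hy1 hhd_space (hfin _ _ _ _)
      apply thickening_subset_cthickening
      rw [mem_thickening_iff]
      refine ⟨y2, hy2, ?_⟩
      calc dist (vstepExt T k (x k) s) y2
          ≤ dist (vstepExt T k (x k) s) y1 + dist y1 y2 := dist_triangle _ _ _
      _ < ε/2 + ε/2 := add_lt_add hdy1 hdy2
      _ = ε := by ring
    have hibev : ∀ᶠ k : ℕ in atTop,
        IntegrableOn (vstepExt T k (x k)) (closedBall t r) volume := by
      filter_upwards [hmem] with k hk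
      refine Integrable.mono' (g := fun _ => R)
        (integrableOn_const (by rw [hvol]; exact ENNReal.ofReal_ne_top))
        (vstep_measurable T k (x k)).aestronglyMeasurable ?_
      exact (ae_restrict_iff' measurableSet_closedBall).2 (ae_of_all _ fun s hs => hR _ (hk s hs))
    set g : ℝ → EuclideanSpace ℝ (Fin n) := A.indicator (fun _ => wv) with hg
    have hgmem : MemLp g 2 (volume.restrict (Icc (0:ℝ) T)) :=
      (memLp_const wv).indicator measurableSet_Ioc
    have hlim := hweak g hgmem
    have hvA : IntegrableOn v A volume := hvint.mono_set (hAsub.trans Ioc_subset_Icc_self)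
    have hAcb : ∀ (q : ℝ → EuclideanSpace ℝ (Fin n)), (∫ s in A, q s) = ∫ s in closedBall t r, q s := by
      intro q
      have h1 : (∫ s in A, q s) = ∫ s in Icc (t-r) (t+r), q s := setIntegral_congr_set Ioc_ae_eq_Icc
      rw [h1, ← hball]
    have hrhs : (∫ s in (0:ℝ)..T, ⟪v s, g s⟫) = ⟪∫ s in closedBall t r, v s, wv⟫ := by
      rw [interval_inner_indicator hT.le measurableSet_Ioc hAsub v hvA wv]
      rw [hAcb v]
    have hev : (fun k => ∫ s in (0:ℝ)..T, ⟪vstepExt T k (x k) s, g s⟫) =ᶠ[atTop]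
        fun k => ⟪∫ s in closedBall t r, vstepExt T k (x k) s, wv⟫ := by
      filter_upwards [hibev] with k hib
      have hibA : IntegrableOn (vstepExt T k (x k)) A volume := by
        rw [IntegrableOn, hrestr]; exact hib
      rw [interval_inner_indicator hT.le measurableSet_Ioc hAsub _ hibA wv]
      rw [hAcb (vstepExt T k (x k))]
    rw [hrhs] at hlim
    have t2 := hlim.congr' hev
    have hkmem : ∀ᶠ k : ℕ in atTop,
        (⨍ s in closedBall t r, vstepExt T k (x k) s) ∈ S := by
      filter_upwards [hmem, hibev] with k hk hib
      exact hSconv.set_average_mem hSclosed hvol0 hvolT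
        ((ae_restrict_iff' measurableSet_closedBall).2 (ae_of_all _ hk)) hib
    set c : ℝ := (volume (closedBall t r)).toReal⁻¹ with hcdef
    have hfavg : ∀ (q : ℝ → EuclideanSpace ℝ (Fin n)),
        f (⨍ s in closedBall t r, q s) = c * ⟪∫ s in closedBall t r, q s, wv⟫ := by
      intro q
      rw [setAverage_eq, _root_.map_smul, smul_eq_mul, ← hfapp, real_inner_comm]
      rfl
    have t3 : Tendsto (fun k => f (⨍ s in closedBall t r, vstepExt T k (x k) s)) atTop
        (𝓝 (f (⨍ s in closedBall t r, v s))) := by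
      simp_rw [hfavg]
      exact t2.const_mul c
    have hge : u0 ≤ f (⨍ s in closedBall t r, v s) :=
      ge_of_tendsto t3 (hkmem.mono fun k hk => (hfS _ hk).le)
    exact absurd hfp (not_lt.2 hge)
  have hevr : ∀ᶠ r in 𝓝[>] (0:ℝ), (⨍ y in closedBall t r, w y) ∈ S := by
    filter_upwards [Ioc_mem_nhdsGT_of_mem ⟨le_refl (0:ℝ), hr0pos⟩] with r hr
    exact hclaim r hr.1 hr.2
  exact hSclosed.mem_of_tendsto hlebt hevr


end
end

section
/- Assume hypotheses (H1) and (H4) relative to an open set U ⊂ ℝ^n containing x̄([0,T]) and a constant m_F > 0, and let φ₀ be continuous on U. Let x̄ : [0,T] → ℝ^n be a trajectory of ẋ(t) ∈ F(x(t),t) a.e. with ẋ̄ Riemann integrable, and for each k let z^k be the piecewise linear function on the uniform grid h_k := T/k, t_j := j·h_k, with z^k(0) = x₀ and constant velocities v^k_j := (z^k(t_j) − z^k(t_{j−1}))/h_k on (t_{j−1}, t_j] satisfying v^k_j ∈ F(z^k(t_j), t_j) and |v^k_j| ≤ m_F, such that z^k → x̄ uniformly on [0,T] and the piecewise constant velocity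 functions v^k converge to ẋ̄ in the L²([0,T];ℝ^n)-norm. Then J_k[z^k] := φ₀(z^k(T)) + h_k·Σ_{j=1}^k f(z^k(t_j), v^k_j, t_j) + Σ_{j=1}^k ∫_{t_{j−1}}^{t_j} |v^k_j − ẋ̄(t)|² dt converges, as k → ∞, to J[x̄] := φ₀(x̄(T)) + ∫₀^T f(x̄(t), ẋ̄(t), t) dt. -/
open scoped Pointwise RealInnerProductSpace
open Metric MeasureTheory Filter Set

noncomputable section

/-- Membership of `t` in the `j`-th grid interval is equivalent to `⌈t/h⌉ = j`. -/
private lemma aux_mem_Ioc_iff {T : ℝ} (hT : 0 < T) {k : ℕ} (hk : 1 ≤ k) (t : ℝ)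
    (j : ℕ) :
    t ∈ Ioc (((j : ℝ) - 1) * (T / k)) ((j : ℝ) * (T / k)) ↔ ⌈t / (T / k)⌉ = (j : ℤ) := by
  have hk0 : (0 : ℝ) < k := by exact_mod_cast hk
  have hpos : 0 < T / (k : ℝ) := div_pos hT hk0
  rw [mem_Ioc, Int.ceil_eq_iff]
  push_cast
  rw [lt_div_iff₀ hpos, div_le_iff₀ hpos]

/-- Every point of `(0, T]` lies in some grid interval. -/
private lemma aux_ceil_index {T : ℝ} (hT : 0 < T) {k : ℕ} (hk : 1 ≤ k) {t : ℝ}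
    (ht : t ∈ Ioc (0 : ℝ) T) : ∃ j : ℕ, 1 ≤ j ∧ j ≤ k ∧ ⌈t / (T / k)⌉ = (j : ℤ) := by
  have hk0 : (0 : ℝ) < k := by exact_mod_cast hk
  have hpos : 0 < T / (k : ℝ) := div_pos hT hk0
  have h1 : 0 < ⌈t / (T / k)⌉ := Int.ceil_pos.2 (div_pos ht.1 hpos)
  have h2 : ⌈t / (T / k)⌉ ≤ (k : ℤ) := by
    apply Int.ceil_le.2
    push_cast
    rw [div_le_iff₀ hpos]
    calc t ≤ T := ht.2
    _ = k * (T / k) := by field_simp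
  exact ⟨⌈t / (T / k)⌉.toNat, by omega, by omega, by omega⟩

/-- Evaluation of a sum of indicators of the grid intervals. -/
private lemma aux_sum_indicator {α : Type*} [AddCommMonoid α] {T : ℝ} (hT : 0 < T) {k : ℕ}
    (hk : 1 ≤ k) (c : ℕ → ℝ → α) {t : ℝ} {j : ℕ} (hj1 : 1 ≤ j) (hjk : j ≤ k)
    (hjt : ⌈t / (T / k)⌉ = (j : ℤ)) :
    (∑ i ∈ Finset.Icc 1 k,
      (Ioc (((i : ℝ) - 1) * (T / (k : ℝ))) ((i : ℝ) * (T / (k : ℝ)))).indicator (c i) t)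
      = c j t := by
  rw [Finset.sum_eq_single_of_mem j (Finset.mem_Icc.2 ⟨hj1, hjk⟩)]
  · exact indicator_of_mem ((aux_mem_Ioc_iff hT hk t j).2 hjt) _
  · intro i hi hij
    apply indicator_of_notMem
    intro hmem
    have := (aux_mem_Ioc_iff hT hk t i).1 hmem
    rw [hjt] at this
    exact hij (by exact_mod_cast this.symm)

/-- The grid intervals cover `(0, kh]`. -/
private lemma aux_union (h : ℝ) (hh : 0 ≤ h) (k : ℕ) :
    (⋃ j ∈ Finset.Icc 1 k, Ioc (((j : ℝ) - 1) * h) ((j : ℝ) * h)) = Ioc 0 ((k : ℝ) * h) := by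
  induction k with
  | zero => simp
  | succ m ih =>
    have hins : Finset.Icc 1 (m + 1) = insert (m + 1) (Finset.Icc 1 m) := by
      rw [← Finset.insert_Icc_right_eq_Icc_add_one (by omega)]
    rw [hins, Finset.set_biUnion_insert, ih, union_comm]
    have e1 : ((m + 1 : ℕ) : ℝ) - 1 = (m : ℝ) := by push_cast; ring
    have e2 : ((m + 1 : ℕ) : ℝ) = (m : ℝ) + 1 := by push_cast; ring
    rw [e1, e2]
    rw [Ioc_union_Ioc_eq_Ioc (by positivity) (by nlinarith)]

set_option maxHeartbeats 2000000 in
/-- convergence of the discrete Bolza costs `J_k[z^k]` to the continuous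
cost `J[x̄]` along strongly convergent implicit Euler discrete trajectories. -/
theorem discrete_cost_convergence
    (n : ℕ) (T : ℝ) (hT : 0 < T) (x₀ : EuclideanSpace ℝ (Fin n))
    (F : EuclideanSpace ℝ (Fin n) → ℝ → Set (EuclideanSpace ℝ (Fin n)))
    (hFne : ∀ x t, (F x t).Nonempty) (hFconv : ∀ x t, Convex ℝ (F x t))
    (hFcpt : ∀ x t, IsCompact (F x t))
    (U : Set (EuclideanSpace ℝ (Fin n))) (hU : IsOpen U) (mF : ℝ) (hmF : 0 < mF)
    -- (H1) uniform boundedness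
    (hFbd : ∀ᵐ t ∂(volume.restrict (Icc (0 : ℝ) T)), ∀ x ∈ U, F x t ⊆ closedBall 0 mF)
    -- the integrand f and (H4)
    (f : EuclideanSpace ℝ (Fin n) → EuclideanSpace ℝ (Fin n) → ℝ → ℝ)
    (hf_bd : ∃ C : ℝ, ∀ x ∈ U, ∀ v ∈ closedBall (0 : EuclideanSpace ℝ (Fin n)) mF,
      ∀ t ∈ Icc (0 : ℝ) T, |f x v t| ≤ C)
    (hf_t : ∀ x ∈ U, ∀ v ∈ closedBall (0 : EuclideanSpace ℝ (Fin n)) mF,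
      ∀ᵐ t ∂(volume.restrict (Icc (0 : ℝ) T)), ContinuousWithinAt (f x v) (Icc (0 : ℝ) T) t)
    (hf_xv : ∃ ν > (0 : ℝ), ∀ ε > (0 : ℝ), ∃ δ > (0 : ℝ), ∀ t ∈ Icc (0 : ℝ) T,
      ∀ p q : EuclideanSpace ℝ (Fin n) × EuclideanSpace ℝ (Fin n),
        (p.1 ∈ U ∧ ‖p.2‖ ≤ mF + ν ∧ ∃ t' ∈ Ioc (t - ν) t, p.2 ∈ F p.1 t') →
        (q.1 ∈ U ∧ ‖q.2‖ ≤ mF + ν ∧ ∃ t' ∈ Ioc (t - ν) t, q.2 ∈ F q.1 t') →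
        dist p q < δ → |f p.1 p.2 t - f q.1 q.2 t| < ε)
    -- terminal cost
    (φ₀ : EuclideanSpace ℝ (Fin n) → ℝ) (hφ₀ : ContinuousOn φ₀ U)
    -- the trajectory x̄ with Riemann integrable derivative
    (xb xb' : ℝ → EuclideanSpace ℝ (Fin n))
    (hx0 : xb 0 = x₀) (hxU : ∀ t ∈ Icc (0 : ℝ) T, xb t ∈ U)
    (hxInt : IntervalIntegrable xb' volume 0 T)
    (hxAC : ∀ t ∈ Icc (0 : ℝ) T, xb t = x₀ + ∫ s in (0 : ℝ)..t, xb' s)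
    (hxF : ∀ᵐ t ∂(volume.restrict (Icc (0 : ℝ) T)), xb' t ∈ F (xb t) t)
    (hRiem₁ : ∃ C : ℝ, ∀ t ∈ Icc (0 : ℝ) T, ‖xb' t‖ ≤ C)
    (hRiem₂ : ∀ᵐ t ∂(volume.restrict (Icc (0 : ℝ) T)), ContinuousWithinAt xb' (Icc (0 : ℝ) T) t)
    -- the discrete trajectories z^k and their velocities
    (z : ℕ → ℕ → EuclideanSpace ℝ (Fin n))
    (hz0 : ∀ k : ℕ, z k 0 = x₀)
    (hzincl : ∀ k : ℕ, 1 ≤ k → ∀ j : ℕ, 1 ≤ j → j ≤ k →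
      (T / k)⁻¹ • (z k j - z k (j - 1)) ∈ F (z k j) ((j : ℝ) * (T / k)) ∧
      ‖(T / k)⁻¹ • (z k j - z k (j - 1))‖ ≤ mF)
    (hzunif : TendstoUniformlyOn
      (fun (k : ℕ) t => z k (⌊t / (T / k)⌋.toNat) +
        ((t - (⌊t / (T / k)⌋.toNat : ℝ) * (T / k)) / (T / k)) •
          (z k (⌊t / (T / k)⌋.toNat + 1) - z k (⌊t / (T / k)⌋.toNat)))
      xb atTop (Icc (0 : ℝ) T))
    (hzvel : Tendsto (fun k : ℕ => ∫ t in (0 : ℝ)..T,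
      ‖(T / k)⁻¹ • (z k ((⌈t / (T / k)⌉ - 1).toNat + 1) - z k ((⌈t / (T / k)⌉ - 1).toNat))
        - xb' t‖ ^ 2) atTop (nhds 0)) :
    Tendsto (fun k : ℕ =>
      φ₀ (z k k) +
      (T / k) * ∑ j ∈ Finset.Icc 1 k,
        f (z k j) ((T / k)⁻¹ • (z k j - z k (j - 1))) ((j : ℝ) * (T / k)) +
      ∑ j ∈ Finset.Icc 1 k, ∫ t in (((j : ℝ) - 1) * (T / k))..((j : ℝ) * (T / k)),
        ‖(T / k)⁻¹ • (z k j - z k (j - 1)) - xb' t‖ ^ 2)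
      atTop
      (nhds (φ₀ (xb T) + ∫ t in (0 : ℝ)..T, f (xb t) (xb' t) t)) := by
  classical
  obtain ⟨ν, hν, hfν⟩ := hf_xv
  obtain ⟨C0, hC0⟩ := hf_bd
  obtain ⟨C1, hC1⟩ := hRiem₁
  have hT0 : (0 : ℝ) ≤ T := hT.le
  set Cf := max C0 0 with hCfdef
  have hCf0 : 0 ≤ Cf := le_max_right _ _
  have hCfb : ∀ x ∈ U, ∀ v ∈ closedBall (0 : EuclideanSpace ℝ (Fin n)) mF,
      ∀ t ∈ Icc (0 : ℝ) T, |f x v t| ≤ Cf :=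
    fun x hx v hv t ht => (hC0 x hx v hv t ht).trans (le_max_left _ _)
  have hC10 : 0 ≤ C1 := le_trans (norm_nonneg _) (hC1 0 ⟨le_refl _, hT0⟩)
  have hkpos : ∀ k : ℕ, 1 ≤ k → 0 < T / (k : ℝ) := by
    intro k hk
    have hk' : (0:ℕ) < k := hk
    exact div_pos hT (by exact_mod_cast hk')
  have hkT : ∀ k : ℕ, 1 ≤ k → (k : ℝ) * (T / k) = T := by
    intro k hk
    have hk0 : (k : ℝ) ≠ 0 := Nat.cast_ne_zero.2 (by omega)
    field_simp
  -- grid point membership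
  have hjhIcc : ∀ k : ℕ, 1 ≤ k → ∀ j : ℕ, j ≤ k → (j : ℝ) * (T / k) ∈ Icc (0 : ℝ) T := by
    intro k hk j hjk
    constructor
    · positivity
    · calc (j : ℝ) * (T / k) ≤ (k : ℝ) * (T / k) :=
            mul_le_mul_of_nonneg_right (by exact_mod_cast hjk) (hkpos k hk).le
      _ = T := hkT k hk
  have hIsub : ∀ k : ℕ, 1 ≤ k → ∀ j : ℕ, 1 ≤ j → j ≤ k →
      Ioc (((j : ℝ) - 1) * (T / k)) ((j : ℝ) * (T / k)) ⊆ Ioc (0 : ℝ) T := by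
    intro k hk j hj1 hjk
    apply Ioc_subset_Ioc
    · have h1 : (1 : ℝ) ≤ (j : ℝ) := by exact_mod_cast hj1
      have := (hkpos k hk).le
      nlinarith
    · exact ((hjhIcc k hk j hjk).2)
  -- Lipschitz continuity of xb
  have hxbLip : ∀ s ∈ Icc (0 : ℝ) T, ∀ t ∈ Icc (0 : ℝ) T, ‖xb t - xb s‖ ≤ C1 * |t - s| := by
    intro s hs t ht
    rw [hxAC t ht, hxAC s hs, add_sub_add_left_eq_sub]
    have hint : ∀ u ∈ Icc (0 : ℝ) T, IntervalIntegrable xb' volume 0 u := by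
      intro u hu
      apply hxInt.mono_set
      apply uIcc_subset_uIcc left_mem_uIcc
      rw [uIcc_of_le hT0]
      exact hu
    rw [intervalIntegral.integral_interval_sub_left (hint t ht) (hint s hs)]
    apply intervalIntegral.norm_integral_le_of_norm_le_const
    intro x hx
    apply hC1
    rcases hx with ⟨h1, h2⟩
    constructor
    · have : (0 : ℝ) ≤ min s t := le_min hs.1 ht.1
      linarith
    · have : max s t ≤ T := max_le hs.2 ht.2
      linarith
  have hxbCont : ContinuousOn xb (Icc 0 T) := by
    apply LipschitzOnWith.continuousOn (K := C1.toNNReal)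
    apply LipschitzOnWith.of_dist_le_mul
    intro x hx y hy
    rw [dist_eq_norm, Real.dist_eq, Real.coe_toNNReal C1 hC10]
    exact hxbLip y hy x hx
  -- thickening of the trajectory inside U
  obtain ⟨ρ, hρ, hρU⟩ : ∃ ρ > 0, thickening ρ (xb '' Icc 0 T) ⊆ U := by
    apply (isCompact_Icc.image_of_continuousOn hxbCont).exists_thickening_subset_open hU
    rintro - ⟨t, ht, rfl⟩
    exact hxU t ht
  -- evaluation of the interpolant at the grid points
  have heval : ∀ k : ℕ, 1 ≤ k → ∀ j : ℕ,
      z k (⌊((j : ℝ) * (T / k)) / (T / k)⌋.toNat) +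
        ((((j : ℝ) * (T / k)) - (⌊((j : ℝ) * (T / k)) / (T / k)⌋.toNat : ℝ) * (T / k)) / (T / k)) •
          (z k (⌊((j : ℝ) * (T / k)) / (T / k)⌋.toNat + 1) -
            z k (⌊((j : ℝ) * (T / k)) / (T / k)⌋.toNat)) = z k j := by
    intro k hk j
    have h0 : T / (k : ℝ) ≠ 0 := (hkpos k hk).ne'
    rw [mul_div_cancel_right₀ _ h0, Int.floor_natCast, Int.toNat_natCast, sub_self, zero_div,
      zero_smul, add_zero]
  have hzerr : ∀ ε > (0 : ℝ), ∀ᶠ k : ℕ in atTop, ∀ j : ℕ, 1 ≤ j → j ≤ k →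
      dist (xb ((j : ℝ) * (T / (k : ℝ)))) (z k j) < ε := by
    intro ε hε
    filter_upwards [Metric.tendstoUniformlyOn_iff.1 hzunif ε hε, eventually_ge_atTop 1]
      with k hk hk1
    intro j hj1 hjk
    have := hk ((j : ℝ) * (T / k)) (hjhIcc k hk1 j hjk)
    rwa [heval k hk1 j] at this
  -- Part A: the terminal cost
  have hAz : Tendsto (fun k : ℕ => z k k) atTop (nhds (xb T)) := by
    apply (hzunif.tendsto_at (right_mem_Icc.2 hT0)).congr'
    filter_upwards [eventually_ge_atTop 1] with k hk
    have := heval k hk k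
    rwa [hkT k hk] at this
  have hA : Tendsto (fun k : ℕ => φ₀ (z k k)) atTop (nhds (φ₀ (xb T))) :=
    ((hφ₀.continuousAt (hU.mem_nhds (hxU T (right_mem_Icc.2 hT0)))).tendsto).comp hAz
  -- the piecewise-constant velocity, discrete cost integrand, and sampled integrand
  set W : ℕ → ℝ → EuclideanSpace ℝ (Fin n) := fun k t => ∑ j ∈ Finset.Icc 1 k,
    (Ioc (((j : ℝ) - 1) * (T / (k : ℝ))) ((j : ℝ) * (T / (k : ℝ)))).indicator
      (fun _ => (T / (k : ℝ))⁻¹ • (z k j - z k (j - 1))) t with hWdef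
  set g : ℕ → ℝ → ℝ := fun k t => ∑ j ∈ Finset.Icc 1 k,
    (Ioc (((j : ℝ) - 1) * (T / (k : ℝ))) ((j : ℝ) * (T / (k : ℝ)))).indicator
      (fun _ => f (z k j) ((T / (k : ℝ))⁻¹ • (z k j - z k (j - 1))) ((j : ℝ) * (T / (k : ℝ)))) t
    with hgdef
  set ψ : ℕ → ℝ → ℝ := fun k t => ∑ j ∈ Finset.Icc 1 k,
    (Ioc (((j : ℝ) - 1) * (T / (k : ℝ))) ((j : ℝ) * (T / (k : ℝ)))).indicator
      (fun s => f (xb s) (xb' s) ((j : ℝ) * (T / (k : ℝ)))) t with hψdef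
  set φ : ℝ → ℝ := fun t => f (xb t) (xb' t) t with hφdef
  set Ek : ℕ → ℝ := fun k => ∫ t in Ioc (0 : ℝ) T, ‖W k t - xb' t‖ ^ 2 with hEkdef
  -- pointwise evaluation
  have hWval : ∀ k : ℕ, 1 ≤ k → ∀ t : ℝ, ∀ j : ℕ, 1 ≤ j → j ≤ k → ⌈t / (T / k)⌉ = (j : ℤ) →
      W k t = (T / (k : ℝ))⁻¹ • (z k j - z k (j - 1)) ∧
      g k t = f (z k j) ((T / (k : ℝ))⁻¹ • (z k j - z k (j - 1))) ((j : ℝ) * (T / (k : ℝ))) ∧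
      ψ k t = f (xb t) (xb' t) ((j : ℝ) * (T / (k : ℝ))) := by
    intro k hk t j hj1 hjk hjt
    refine ⟨?_, ?_, ?_⟩
    · rw [hWdef]; exact aux_sum_indicator hT hk _ hj1 hjk hjt
    · rw [hgdef]; exact aux_sum_indicator hT hk _ hj1 hjk hjt
    · rw [hψdef]; exact aux_sum_indicator hT hk _ hj1 hjk hjt
  have hWmeas : ∀ k : ℕ, Measurable (W k) := by
    intro k
    apply Finset.measurable_sum
    intro j _
    exact measurable_const.indicator measurableSet_Ioc
  have hxm : AEStronglyMeasurable xb' (volume.restrict (Ioc (0 : ℝ) T)) :=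
    hxInt.1.aestronglyMeasurable
  have hWint : ∀ k : ℕ, 1 ≤ k →
      Integrable (fun t => ‖W k t - xb' t‖ ^ 2) (volume.restrict (Ioc (0 : ℝ) T)) := by
    intro k hk
    have hmeas : AEStronglyMeasurable (fun t => ‖W k t - xb' t‖ ^ 2)
        (volume.restrict (Ioc (0 : ℝ) T)) :=
      (continuous_norm.pow 2).comp_aestronglyMeasurable
        ((hWmeas k).aestronglyMeasurable.sub hxm)
    apply Integrable.mono' (integrable_const ((mF + C1) ^ 2)) hmeas
    filter_upwards [ae_restrict_mem measurableSet_Ioc] with t ht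
    obtain ⟨j, hj1, hjk, hjt⟩ := aux_ceil_index hT hk ht
    rw [(hWval k hk t j hj1 hjk hjt).1]
    have h1 : ‖(T / (k : ℝ))⁻¹ • (z k j - z k (j - 1))‖ ≤ mF := (hzincl k hk j hj1 hjk).2
    have h2 : ‖xb' t‖ ≤ C1 := hC1 t ⟨ht.1.le, ht.2⟩
    have h3 : ‖(T / (k : ℝ))⁻¹ • (z k j - z k (j - 1)) - xb' t‖ ≤ mF + C1 :=
      (norm_sub_le _ _).trans (by linarith)
    rw [Real.norm_eq_abs, abs_of_nonneg (by positivity)]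
    have h4 : (0:ℝ) ≤ ‖(T / (k : ℝ))⁻¹ • (z k j - z k (j - 1)) - xb' t‖ := norm_nonneg _
    nlinarith
  -- the L² error tends to 0
  have hEtendsto : Tendsto Ek atTop (nhds 0) := by
    apply hzvel.congr'
    filter_upwards [eventually_ge_atTop 1] with k hk
    rw [intervalIntegral.integral_of_le hT0, hEkdef]
    apply setIntegral_congr_fun measurableSet_Ioc
    intro t ht
    obtain ⟨j, hj1, hjk, hjt⟩ := aux_ceil_index hT hk ht
    have h1 : (⌈t / (T / (k : ℝ))⌉ - 1).toNat = j - 1 := by omega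
    have h3 : j - 1 + 1 = j := by omega
    simp only [h1, h3, (hWval k hk t j hj1 hjk hjt).1]
  -- pairwise disjointness of the grid intervals
  have hdisj : ∀ k : ℕ, Set.Pairwise ↑(Finset.Icc 1 k)
      (Function.onFun Disjoint fun j : ℕ =>
        Ioc (((j : ℝ) - 1) * (T / (k : ℝ))) ((j : ℝ) * (T / (k : ℝ)))) := by
    intro k
    have key : ∀ i j : ℕ, i < j → Disjoint
        (Ioc (((i : ℝ) - 1) * (T / (k : ℝ))) ((i : ℝ) * (T / (k : ℝ))))
        (Ioc (((j : ℝ) - 1) * (T / (k : ℝ))) ((j : ℝ) * (T / (k : ℝ)))) := by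
      intro i j hij
      apply Set.Ioc_disjoint_Ioc.2
      have h1 : (i : ℝ) ≤ (j : ℝ) - 1 := by
        have : (i : ℝ) + 1 ≤ (j : ℝ) := by exact_mod_cast hij
        linarith
      have hk0 : (0 : ℝ) ≤ T / (k : ℝ) := by positivity
      calc min ((i : ℝ) * (T / k)) ((j : ℝ) * (T / k)) ≤ (i : ℝ) * (T / k) := min_le_left _ _
      _ ≤ ((j : ℝ) - 1) * (T / k) := mul_le_mul_of_nonneg_right h1 hk0
      _ ≤ max (((i : ℝ) - 1) * (T / k)) (((j : ℝ) - 1) * (T / k)) := le_max_right _ _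
    intro i hi j hj hij
    rcases lt_or_gt_of_ne hij with h | h
    · exact key i j h
    · exact (key j i h).symm
  -- Part C : the quadratic term
  have hCeq : ∀ k : ℕ, 1 ≤ k →
      Ek k = ∑ j ∈ Finset.Icc 1 k, ∫ t in (((j : ℝ) - 1) * (T / k))..((j : ℝ) * (T / k)),
        ‖(T / (k : ℝ))⁻¹ • (z k j - z k (j - 1)) - xb' t‖ ^ 2 := by
    intro k hk
    have hle : ∀ j : ℕ, (((j : ℝ) - 1) * (T / k)) ≤ ((j : ℝ) * (T / k)) := by
      intro j
      have : (0 : ℝ) ≤ T / (k : ℝ) := (hkpos k hk).le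
      nlinarith
    have hunion : (⋃ j ∈ Finset.Icc 1 k,
        Ioc (((j : ℝ) - 1) * (T / (k : ℝ))) ((j : ℝ) * (T / (k : ℝ)))) = Ioc (0 : ℝ) T := by
      rw [aux_union (T / (k : ℝ)) (hkpos k hk).le k, hkT k hk]
    calc Ek k = ∫ t in (⋃ j ∈ Finset.Icc 1 k,
          Ioc (((j : ℝ) - 1) * (T / (k : ℝ))) ((j : ℝ) * (T / (k : ℝ)))),
          ‖W k t - xb' t‖ ^ 2 := by rw [hunion, hEkdef]
    _ = ∑ j ∈ Finset.Icc 1 k, ∫ t in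
          Ioc (((j : ℝ) - 1) * (T / (k : ℝ))) ((j : ℝ) * (T / (k : ℝ))),
          ‖W k t - xb' t‖ ^ 2 := by
        apply integral_biUnion_finset _ (fun j _ => measurableSet_Ioc) (hdisj k)
        intro j hj
        obtain ⟨hj1, hjk⟩ := Finset.mem_Icc.1 hj
        exact (hWint k hk).mono_measure (Measure.restrict_mono (hIsub k hk j hj1 hjk) le_rfl)
    _ = ∑ j ∈ Finset.Icc 1 k, ∫ t in
          Ioc (((j : ℝ) - 1) * (T / (k : ℝ))) ((j : ℝ) * (T / (k : ℝ))),
          ‖(T / (k : ℝ))⁻¹ • (z k j - z k (j - 1)) - xb' t‖ ^ 2 := by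
        apply Finset.sum_congr rfl
        intro j hj
        obtain ⟨hj1, hjk⟩ := Finset.mem_Icc.1 hj
        apply setIntegral_congr_fun measurableSet_Ioc
        intro t ht
        simp only [(hWval k hk t j hj1 hjk ((aux_mem_Ioc_iff hT hk t j).1 ht)).1]
    _ = ∑ j ∈ Finset.Icc 1 k, ∫ t in (((j : ℝ) - 1) * (T / k))..((j : ℝ) * (T / k)),
          ‖(T / (k : ℝ))⁻¹ • (z k j - z k (j - 1)) - xb' t‖ ^ 2 := by
        apply Finset.sum_congr rfl
        intro j hj
        rw [intervalIntegral.integral_of_le (hle j)]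
  have hCpart : Tendsto (fun k : ℕ => ∑ j ∈ Finset.Icc 1 k,
      ∫ t in (((j : ℝ) - 1) * (T / k))..((j : ℝ) * (T / k)),
        ‖(T / (k : ℝ))⁻¹ • (z k j - z k (j - 1)) - xb' t‖ ^ 2) atTop (nhds 0) := by
    apply hEtendsto.congr'
    filter_upwards [eventually_ge_atTop 1] with k hk
    exact hCeq k hk
  -- the full-measure good set S'
  have hres : volume.restrict (Ioc (0 : ℝ) T) = volume.restrict (Icc (0 : ℝ) T) :=
    Measure.restrict_congr_set Ioc_ae_eq_Icc
  set S₀ : Set ℝ := {t | t ∈ Icc (0 : ℝ) T ∧ xb' t ∈ F (xb t) t ∧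
    (∀ x ∈ U, F x t ⊆ closedBall 0 mF) ∧ ContinuousWithinAt xb' (Icc (0 : ℝ) T) t} with hS₀def
  have hS₀ae : ∀ᵐ t ∂(volume.restrict (Icc (0 : ℝ) T)), t ∈ S₀ := by
    filter_upwards [hxF, hFbd, hRiem₂, ae_restrict_mem measurableSet_Icc] with t h1 h2 h3 h4
    exact ⟨h4, h1, h2, h3⟩
  have hS₀U : ∀ t ∈ S₀, xb t ∈ U := fun t ht => hxU t ht.1
  have hS₀mF : ∀ t ∈ S₀, xb' t ∈ closedBall (0 : EuclideanSpace ℝ (Fin n)) mF :=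
    fun t ht => ht.2.2.1 _ (hxU t ht.1) ht.2.1
  have hS₀n : ∀ t ∈ S₀, ‖xb' t‖ ≤ mF := fun t ht =>
    mem_closedBall_zero_iff.1 (hS₀mF t ht)
  obtain ⟨D, hDS₀, hDcnt, hDdense⟩ :=
    (TopologicalSpace.IsSeparable.of_separableSpace S₀).exists_countable_dense_subset
  have hDae : ∀ᵐ t ∂(volume.restrict (Icc (0 : ℝ) T)), ∀ d ∈ D,
      ContinuousWithinAt (f (xb d) (xb' d)) (Icc (0 : ℝ) T) t :=
    (ae_ball_iff hDcnt).2 fun d hd =>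
      hf_t (xb d) (hS₀U d (hDS₀ hd)) (xb' d) (hS₀mF d (hDS₀ hd))
  set G : Set ℝ := {t | t ∈ S₀ ∧ ∀ d ∈ D,
      ContinuousWithinAt (f (xb d) (xb' d)) (Icc (0 : ℝ) T) t} with hGdef
  have hGae : ∀ᵐ t ∂(volume.restrict (Ioc (0 : ℝ) T)), t ∈ G := by
    rw [hres]
    filter_upwards [hS₀ae, hDae] with t h1 h2
    exact ⟨h1, h2⟩
  have hbad : volume ({t | t ∉ G} ∩ Ioc (0 : ℝ) T) = 0 := by
    have h := hGae
    rw [MeasureTheory.ae_iff, Measure.restrict_apply' measurableSet_Ioc] at h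
    exact h
  set S' : Set ℝ := Ioc (0 : ℝ) T \ toMeasurable volume ({t | t ∉ G} ∩ Ioc (0 : ℝ) T)
    with hS'def
  have hS'meas : MeasurableSet S' := measurableSet_Ioc.diff (measurableSet_toMeasurable _ _)
  have hS'G : S' ⊆ G := by
    intro t ht
    by_contra hc
    exact ht.2 (subset_toMeasurable _ _ ⟨hc, ht.1⟩)
  have hS'Ioc : S' ⊆ Ioc 0 T := fun t ht => ht.1
  have hS'Icc : S' ⊆ Icc 0 T := fun t ht => ⟨(hS'Ioc ht).1.le, (hS'Ioc ht).2⟩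
  have hS'null : volume (Ioc (0 : ℝ) T \ S') = 0 := by
    apply measure_mono_null (t := toMeasurable volume ({t | t ∉ G} ∩ Ioc (0 : ℝ) T))
    · intro t ht
      rcases ht with ⟨h1, h2⟩
      by_contra hc
      exact h2 ⟨h1, hc⟩
    · rw [measure_toMeasurable]
      exact hbad
  have hS'ae : ∀ᵐ t ∂(volume.restrict (Ioc (0 : ℝ) T)), t ∈ S' := by
    rw [MeasureTheory.ae_iff, Measure.restrict_apply' measurableSet_Ioc]
    apply measure_mono_null _ hS'null
    intro t ht
    simp only [mem_inter_iff, mem_setOf_eq] at ht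
    exact mem_diff_of_mem ht.2 ht.1
  have hresS' : volume.restrict (Ioc (0 : ℝ) T) = volume.restrict S' := by
    apply Measure.restrict_congr_set
    rw [ae_eq_set]
    constructor
    · exact hS'null
    · rw [diff_eq_empty.2 hS'Ioc]
      exact measure_empty
  -- uniform continuity of the pair (xb, xb') at points of S₀
  have hpair : ∀ t₀ ∈ S₀, ∀ δ > (0 : ℝ), ∃ η > (0 : ℝ), ∀ r ∈ Icc (0 : ℝ) T, |r - t₀| < η →
      ‖xb r - xb t₀‖ < δ ∧ ‖xb' r - xb' t₀‖ < δ := by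
    intro t₀ ht₀ δ hδ
    have h1 := hxbCont t₀ ht₀.1
    have h2 := ht₀.2.2.2
    rw [Metric.continuousWithinAt_iff] at h1 h2
    obtain ⟨η₁, hη₁, H1⟩ := h1 δ hδ
    obtain ⟨η₂, hη₂, H2⟩ := h2 δ hδ
    refine ⟨min η₁ η₂, lt_min hη₁ hη₂, fun r hr hlt => ⟨?_, ?_⟩⟩
    · have := H1 hr (show dist r t₀ < η₁ by
        rw [Real.dist_eq]; exact hlt.trans_le (min_le_left _ _))
      rwa [dist_eq_norm] at this
    · have := H2 hr (show dist r t₀ < η₂ by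
        rw [Real.dist_eq]; exact hlt.trans_le (min_le_right _ _))
      rwa [dist_eq_norm] at this
  -- we can pick points of D just to the left of any point of S'
  have hpick : ∀ t₀ ∈ S', ∀ η > (0 : ℝ), ∃ d ∈ D, d ∈ Ioo (t₀ - η) t₀ := by
    intro t₀ ht₀ η hη
    have ht₀Ioc := hS'Ioc ht₀
    set a := max (t₀ - η) 0 with hadef
    have ha1 : a < t₀ := max_lt (by linarith [ht₀Ioc.1]) ht₀Ioc.1
    have hne : (S₀ ∩ Ioo a t₀).Nonempty := by
      by_contra hc
      rw [not_nonempty_iff_eq_empty] at hc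
      have hsub : Ioo a t₀ ⊆ {t | t ∉ S₀} ∩ Icc 0 T := by
        intro x hx
        constructor
        · intro hxS
          have : x ∈ S₀ ∩ Ioo a t₀ := ⟨hxS, hx⟩
          rw [hc] at this
          exact this
        · exact ⟨le_trans (le_max_right _ _) hx.1.le, hx.2.le.trans ht₀Ioc.2⟩
      have h0 : volume ({t | t ∉ S₀} ∩ Icc (0 : ℝ) T) = 0 := by
        have h := hS₀ae
        rw [MeasureTheory.ae_iff, Measure.restrict_apply' measurableSet_Icc] at h
        exact h
      have := measure_mono_null hsub h0
      rw [Real.volume_Ioo] at this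
      rw [ENNReal.ofReal_eq_zero] at this
      linarith
    obtain ⟨s₀, hs₀S, hs₀I⟩ := hne
    have hcl := hDdense hs₀S
    rw [_root_.mem_closure_iff] at hcl
    obtain ⟨d, hdI, hdD⟩ := hcl (Ioo a t₀) isOpen_Ioo hs₀I
    exact ⟨d, hdD, Ioo_subset_Ioo (le_max_left _ _) le_rfl hdI⟩
  -- the master continuity lemma (M)
  have hM : ∀ t₀ ∈ S', ∀ ε > (0 : ℝ), ∃ η > (0 : ℝ), ∀ t ∈ S', ∀ s ∈ Icc (0 : ℝ) T,
      t₀ - η < t → t ≤ s → s < t₀ + η →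
      |f (xb t) (xb' t) s - f (xb t₀) (xb' t₀) t₀| < ε := by
    intro t₀ ht₀ ε hε
    obtain ⟨δ, hδ, hfδ⟩ := hfν (ε / 3) (by positivity)
    have ht₀G := hS'G ht₀
    have ht₀S₀ : t₀ ∈ S₀ := ht₀G.1
    have ht₀Icc : t₀ ∈ Icc (0 : ℝ) T := ht₀S₀.1
    obtain ⟨η₁', hη₁', H₁⟩ := hpair t₀ ht₀S₀ (δ / 3) (by positivity)
    set η₁ := min η₁' (ν / 2) with hη₁def
    have hη₁pos : 0 < η₁ := lt_min hη₁' (by positivity)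
    have hη₁ν : η₁ ≤ ν / 2 := min_le_right _ _
    have hη₁le : η₁ ≤ η₁' := min_le_left _ _
    obtain ⟨d, hdD, hdI⟩ := hpick t₀ ht₀ η₁ hη₁pos
    have hdS₀ : d ∈ S₀ := hDS₀ hdD
    have hdIcc : d ∈ Icc (0 : ℝ) T := hdS₀.1
    have hdist_d : |d - t₀| < η₁ := by
      rw [abs_sub_lt_iff]
      constructor
      · linarith [hdI.2]
      · linarith [hdI.1]
    have hd1 := H₁ d hdIcc (lt_of_lt_of_le hdist_d hη₁le)
    have hcont_d := ht₀G.2 d hdD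
    rw [Metric.continuousWithinAt_iff] at hcont_d
    obtain ⟨η₂, hη₂, H₂⟩ := hcont_d (ε / 3) (by positivity)
    refine ⟨min (min η₂ η₁) ((t₀ - d) / 2), by
      apply lt_min (lt_min hη₂ hη₁pos)
      linarith [hdI.2], ?_⟩
    intro t ht s hs h1 h2 h3
    set η := min (min η₂ η₁) ((t₀ - d) / 2) with hηdef
    have hηη₂ : η ≤ η₂ := le_trans (min_le_left _ _) (min_le_left _ _)
    have hηη₁ : η ≤ η₁ := le_trans (min_le_left _ _) (min_le_right _ _)
    have hηd : η ≤ (t₀ - d) / 2 := min_le_right _ _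
    have htS₀ : t ∈ S₀ := (hS'G ht).1
    have htIcc : t ∈ Icc (0 : ℝ) T := htS₀.1
    have e1 : |t - t₀| < η₁ := by
      rw [abs_sub_lt_iff]
      constructor <;> linarith
    have e2 : |s - t₀| < η₂ := by
      rw [abs_sub_lt_iff]
      constructor <;> linarith
    have e3 : d < t := by linarith [hdI.2]
    have e4 : s - d < ν := by
      have l1 : t₀ - d < η₁ := by linarith [hdI.1]
      linarith
    have e5 : s - t < ν := by linarith
    have ht1 := H₁ t htIcc (lt_of_lt_of_le e1 hη₁le)
    have key1 : |f (xb t) (xb' t) s - f (xb d) (xb' d) s| < ε / 3 := by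
      apply hfδ s hs (xb t, xb' t) (xb d, xb' d)
      · exact ⟨hS₀U t htS₀, le_trans (hS₀n t htS₀) (by linarith),
          t, ⟨by linarith, h2⟩, htS₀.2.1⟩
      · exact ⟨hS₀U d hdS₀, le_trans (hS₀n d hdS₀) (by linarith),
          d, ⟨by linarith, by linarith⟩, hdS₀.2.1⟩
      · rw [Prod.dist_eq, sup_lt_iff]
        constructor
        · show dist (xb t) (xb d) < δ
          calc dist (xb t) (xb d) ≤ dist (xb t) (xb t₀) + dist (xb t₀) (xb d) :=
                dist_triangle _ _ _
          _ < δ / 3 + δ / 3 := by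
              apply add_lt_add
              · rw [dist_eq_norm]; exact ht1.1
              · rw [dist_comm, dist_eq_norm]; exact hd1.1
          _ < δ := by linarith
        · show dist (xb' t) (xb' d) < δ
          calc dist (xb' t) (xb' d) ≤ dist (xb' t) (xb' t₀) + dist (xb' t₀) (xb' d) :=
                dist_triangle _ _ _
          _ < δ / 3 + δ / 3 := by
              apply add_lt_add
              · rw [dist_eq_norm]; exact ht1.2
              · rw [dist_comm, dist_eq_norm]; exact hd1.2
          _ < δ := by linarith
    have key2 : |f (xb d) (xb' d) s - f (xb d) (xb' d) t₀| < ε / 3 := by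
      have := H₂ hs (show dist s t₀ < η₂ by rw [Real.dist_eq]; exact e2)
      rwa [Real.dist_eq] at this
    have key3 : |f (xb d) (xb' d) t₀ - f (xb t₀) (xb' t₀) t₀| < ε / 3 := by
      apply hfδ t₀ ht₀Icc (xb d, xb' d) (xb t₀, xb' t₀)
      · refine ⟨hS₀U d hdS₀, le_trans (hS₀n d hdS₀) (by linarith), d, ⟨?_, hdI.2.le⟩,
          hdS₀.2.1⟩
        have l1 : t₀ - d < η₁ := by linarith [hdI.1]
        linarith
      · exact ⟨hS₀U t₀ ht₀S₀, le_trans (hS₀n t₀ ht₀S₀) (by linarith),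
          t₀, ⟨by linarith, le_rfl⟩, ht₀S₀.2.1⟩
      · rw [Prod.dist_eq, sup_lt_iff]
        constructor
        · show dist (xb d) (xb t₀) < δ
          rw [dist_eq_norm]
          exact lt_trans hd1.1 (by linarith)
        · show dist (xb' d) (xb' t₀) < δ
          rw [dist_eq_norm]
          exact lt_trans hd1.2 (by linarith)
    have tri1 := abs_sub_le (f (xb t) (xb' t) s) (f (xb d) (xb' d) s) (f (xb t₀) (xb' t₀) t₀)
    have tri2 := abs_sub_le (f (xb d) (xb' d) s) (f (xb d) (xb' d) t₀) (f (xb t₀) (xb' t₀) t₀)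
    linarith
  -- φ is continuous on S', hence a.e. strongly measurable and integrable
  have hφS' : ContinuousOn φ S' := by
    intro t₀ ht₀
    rw [Metric.continuousWithinAt_iff]
    intro ε hε
    obtain ⟨η, hη, H⟩ := hM t₀ ht₀ ε hε
    refine ⟨η, hη, fun t htS hdist => ?_⟩
    rw [Real.dist_eq] at hdist ⊢
    have habs := abs_sub_lt_iff.1 hdist
    exact H t htS t (hS'Icc htS) (by linarith [habs.2]) le_rfl (by linarith [habs.1])
  have hφmeasS : AEStronglyMeasurable φ (volume.restrict (Ioc (0 : ℝ) T)) := by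
    rw [hresS']
    exact (hφS'.aemeasurable hS'meas).aestronglyMeasurable
  have hφbd : ∀ t ∈ S', |φ t| ≤ Cf := fun t ht =>
    hCfb _ (hS₀U t (hS'G ht).1) _ (hS₀mF t (hS'G ht).1) t (hS'G ht).1.1
  have hφint : Integrable φ (volume.restrict (Ioc (0 : ℝ) T)) := by
    apply Integrable.mono' (integrable_const Cf) hφmeasS
    filter_upwards [hS'ae] with t ht
    rw [Real.norm_eq_abs]
    exact hφbd t ht
  -- measurability of the sampled integrand on each grid interval
  have hψjmeas : ∀ k : ℕ, 1 ≤ k → T / (k : ℝ) < ν → ∀ j : ℕ, 1 ≤ j → j ≤ k →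
      AEMeasurable (fun t => f (xb t) (xb' t) ((j : ℝ) * (T / (k : ℝ))))
        (volume.restrict (Ioc (((j : ℝ) - 1) * (T / (k : ℝ))) ((j : ℝ) * (T / (k : ℝ))))) := by
    intro k hk hkν j hj1 hjk
    have hsub := hIsub k hk j hj1 hjk
    have hcongr : volume.restrict (Ioc (((j : ℝ) - 1) * (T / (k : ℝ))) ((j : ℝ) * (T / (k : ℝ))))
        = volume.restrict (S' ∩ Ioc (((j : ℝ) - 1) * (T / (k : ℝ))) ((j : ℝ) * (T / (k : ℝ)))) := by
      apply Measure.restrict_congr_set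
      rw [ae_eq_set]
      constructor
      · apply measure_mono_null (t := Ioc (0 : ℝ) T \ S')
        · intro t ht
          exact ⟨hsub ht.1, fun hS => ht.2 ⟨hS, ht.1⟩⟩
        · exact hS'null
      · apply measure_mono_null (t := (∅ : Set ℝ))
        · intro t ht
          exact (ht.2 ht.1.2).elim
        · exact measure_empty
    rw [hcongr]
    apply ContinuousOn.aemeasurable _ (hS'meas.inter measurableSet_Ioc)
    intro t₀ ht₀
    rw [Metric.continuousWithinAt_iff]
    intro ε hε
    obtain ⟨δ, hδ, hfδ⟩ := hfν ε hε
    have ht₀S₀ := (hS'G ht₀.1).1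
    obtain ⟨η, hη, H⟩ := hpair t₀ ht₀S₀ (δ / 2) (by positivity)
    refine ⟨η, hη, fun t ht hdist => ?_⟩
    rw [Real.dist_eq] at hdist
    have htS₀ := (hS'G ht.1).1
    rw [Real.dist_eq]
    have hmul : ((j : ℝ) - 1) * (T / (k : ℝ)) = (j : ℝ) * (T / (k : ℝ)) - T / (k : ℝ) := by ring
    apply hfδ ((j : ℝ) * (T / (k : ℝ))) (hjhIcc k hk j hjk) (xb t, xb' t) (xb t₀, xb' t₀)
    · refine ⟨hS₀U t htS₀, le_trans (hS₀n t htS₀) (by linarith), t, ⟨?_, ht.2.2⟩, htS₀.2.1⟩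
      have := ht.2.1
      rw [hmul] at this
      linarith
    · refine ⟨hS₀U t₀ ht₀S₀, le_trans (hS₀n t₀ ht₀S₀) (by linarith), t₀,
        ⟨?_, ht₀.2.2⟩, ht₀S₀.2.1⟩
      have := ht₀.2.1
      rw [hmul] at this
      linarith
    · rw [Prod.dist_eq, sup_lt_iff]
      have hH := H t htS₀.1 hdist
      constructor
      · show dist (xb t) (xb t₀) < δ
        rw [dist_eq_norm]
        exact hH.1.trans (by linarith)
      · show dist (xb' t) (xb' t₀) < δ
        rw [dist_eq_norm]
        exact hH.2.trans (by linarith)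
  -- global measurability, bound, integrability for ψ
  have hψmeas : ∀ k : ℕ, 1 ≤ k → T / (k : ℝ) < ν →
      AEStronglyMeasurable (ψ k) (volume.restrict (Ioc (0 : ℝ) T)) := by
    intro k hk hkν
    apply AEMeasurable.aestronglyMeasurable
    rw [hψdef]
    apply Finset.aemeasurable_fun_sum
    intro j hj
    obtain ⟨hj1, hjk⟩ := Finset.mem_Icc.1 hj
    apply (aemeasurable_indicator_iff measurableSet_Ioc).2
    rw [Measure.restrict_restrict measurableSet_Ioc,
      inter_eq_self_of_subset_left (hIsub k hk j hj1 hjk)]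
    exact hψjmeas k hk hkν j hj1 hjk
  have hψbd : ∀ k : ℕ, 1 ≤ k →
      ∀ᵐ t ∂(volume.restrict (Ioc (0 : ℝ) T)), |ψ k t| ≤ Cf := by
    intro k hk
    filter_upwards [hS'ae, ae_restrict_mem measurableSet_Ioc] with t ht htIoc
    obtain ⟨j, hj1, hjk, hjt⟩ := aux_ceil_index hT hk htIoc
    rw [(hWval k hk t j hj1 hjk hjt).2.2]
    exact hCfb _ (hS₀U t (hS'G ht).1) _ (hS₀mF t (hS'G ht).1) _ (hjhIcc k hk j hjk)
  have hψint : ∀ k : ℕ, 1 ≤ k → T / (k : ℝ) < ν →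
      Integrable (ψ k) (volume.restrict (Ioc (0 : ℝ) T)) := by
    intro k hk hkν
    apply Integrable.mono' (integrable_const Cf) (hψmeas k hk hkν)
    filter_upwards [hψbd k hk] with t ht
    rwa [Real.norm_eq_abs]
  -- the time-sampling error goes to 0 in L¹ (dominated convergence)
  have hsmall : Tendsto (fun k : ℕ => T / (k : ℝ)) atTop (nhds 0) :=
    tendsto_const_div_atTop_nhds_zero_nat T
  have hνev : ∀ᶠ k : ℕ in atTop, T / (k : ℝ) < ν := hsmall.eventually (gt_mem_nhds hν)
  have hψφDCT : Tendsto (fun k : ℕ => ∫ t in Ioc (0 : ℝ) T, |ψ k t - φ t|)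
      atTop (nhds 0) := by
    have h0 : Tendsto (fun k : ℕ => ∫ t in Ioc (0 : ℝ) T, |ψ k t - φ t|)
        atTop (nhds (∫ _ in Ioc (0 : ℝ) T, (0 : ℝ))) := by
      apply tendsto_integral_filter_of_dominated_convergence (fun _ => 2 * Cf)
      · filter_upwards [hνev, eventually_ge_atTop 1] with k h1 h2
        have := ((hψmeas k h2 h1).sub hφmeasS).norm
        simpa [Real.norm_eq_abs] using this
      · filter_upwards [hνev, eventually_ge_atTop 1] with k h1 h2
        filter_upwards [hS'ae, ae_restrict_mem measurableSet_Ioc, hψbd k h2]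
          with t ht htIoc hb
        rw [Real.norm_eq_abs, abs_abs]
        have b2 := hφbd t ht
        calc |ψ k t - φ t| ≤ |ψ k t| + |φ t| := abs_sub _ _
        _ ≤ 2 * Cf := by linarith
      · exact integrable_const _
      · filter_upwards [hS'ae, ae_restrict_mem measurableSet_Ioc] with t ht htIoc
        rw [Metric.tendsto_nhds]
        intro ε hε
        obtain ⟨η, hη, H⟩ := hM t ht ε hε
        have hν2 : ∀ᶠ k : ℕ in atTop, T / (k : ℝ) < min η ν :=
          hsmall.eventually (gt_mem_nhds (lt_min hη hν))
        filter_upwards [hν2, eventually_ge_atTop 1] with k h1 h2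
        obtain ⟨j, hj1, hjk, hjt⟩ := aux_ceil_index hT h2 htIoc
        have hIv := (aux_mem_Ioc_iff hT h2 t j).2 hjt
        have hmul : ((j : ℝ) - 1) * (T / (k : ℝ)) = (j : ℝ) * (T / (k : ℝ)) - T / (k : ℝ) := by
          ring
        rw [Real.dist_eq, sub_zero, abs_abs, (hWval k h2 t j hj1 hjk hjt).2.2]
        apply H t ht ((j : ℝ) * (T / (k : ℝ))) (hjhIcc k h2 j hjk) (by linarith) hIv.2
        have := hIv.1
        rw [hmul] at this
        have hηk : T / (k : ℝ) < η := lt_of_lt_of_le h1 (min_le_left _ _)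
        linarith
    simpa using h0
  -- integrability of g
  have hgint : ∀ k : ℕ, Integrable (g k) (volume.restrict (Ioc (0 : ℝ) T)) := by
    intro k
    rw [hgdef]
    apply integrable_finset_sum
    intro j _
    exact (integrable_const _).indicator measurableSet_Ioc
  -- the discrete sum equals the integral of g
  have hBeq : ∀ k : ℕ, 1 ≤ k → (T / (k : ℝ)) * ∑ j ∈ Finset.Icc 1 k,
      f (z k j) ((T / (k : ℝ))⁻¹ • (z k j - z k (j - 1))) ((j : ℝ) * (T / (k : ℝ)))
      = ∫ t in Ioc (0 : ℝ) T, g k t := by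
    intro k hk
    rw [hgdef]
    rw [integral_finset_sum _ (fun j _ => (integrable_const _).indicator measurableSet_Ioc)]
    rw [Finset.mul_sum]
    apply Finset.sum_congr rfl
    intro j hj
    obtain ⟨hj1, hjk⟩ := Finset.mem_Icc.1 hj
    rw [integral_indicator_const _ measurableSet_Ioc]
    rw [measureReal_def, Measure.restrict_apply' measurableSet_Ioc,
      inter_eq_self_of_subset_left (hIsub k hk j hj1 hjk), Real.volume_Ioc]
    have harith : (j : ℝ) * (T / (k : ℝ)) - ((j : ℝ) - 1) * (T / (k : ℝ)) = T / (k : ℝ) := by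
      ring
    rw [harith, ENNReal.toReal_ofReal (hkpos k hk).le, smul_eq_mul]
  -- Part B : the running cost
  have hB : Tendsto (fun k : ℕ => (T / (k : ℝ)) * ∑ j ∈ Finset.Icc 1 k,
      f (z k j) ((T / (k : ℝ))⁻¹ • (z k j - z k (j - 1))) ((j : ℝ) * (T / (k : ℝ))))
      atTop (nhds (∫ t in Ioc (0 : ℝ) T, φ t)) := by
    rw [Metric.tendsto_nhds]
    intro ε hε
    have hε₁ : 0 < ε / (4 * (T + 1)) := by positivity
    obtain ⟨δ, hδ, hfδ⟩ := hfν (ε / (4 * (T + 1))) hε₁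
    set c := 8 * Cf / δ ^ 2 with hcdef
    have hc0 : 0 ≤ c := by positivity
    have ev2 : ∀ᶠ k : ℕ in atTop, T / (k : ℝ) < min ν (δ / (4 * (C1 + 1))) :=
      hsmall.eventually (gt_mem_nhds (lt_min hν (by positivity)))
    have ev3 : ∀ᶠ k : ℕ in atTop, ∀ j : ℕ, 1 ≤ j → j ≤ k →
        dist (xb ((j : ℝ) * (T / (k : ℝ)))) (z k j) < min (δ / 4) ρ :=
      hzerr _ (lt_min (by positivity) hρ)
    have ev4 : ∀ᶠ k : ℕ in atTop, c * Ek k < ε / 4 := by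
      have h := hEtendsto.const_mul c
      rw [mul_zero] at h
      exact h.eventually (gt_mem_nhds (by positivity))
    have ev5 : ∀ᶠ k : ℕ in atTop, ∫ t in Ioc (0 : ℝ) T, |ψ k t - φ t| < ε / 4 :=
      hψφDCT.eventually (gt_mem_nhds (by positivity))
    filter_upwards [eventually_ge_atTop 1, ev2, ev3, ev4, ev5] with k hk hk2 hk3 hk4 hk5
    have hkν : T / (k : ℝ) < ν := hk2.trans_le (min_le_left _ _)
    have hkδ : T / (k : ℝ) < δ / (4 * (C1 + 1)) := hk2.trans_le (min_le_right _ _)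
    -- pointwise comparison of g and ψ
    have hptwise : ∀ᵐ t ∂(volume.restrict (Ioc (0 : ℝ) T)),
        |g k t - ψ k t| ≤ ε / (4 * (T + 1)) + c * ‖W k t - xb' t‖ ^ 2 := by
      filter_upwards [hS'ae, ae_restrict_mem measurableSet_Ioc] with t ht htIoc
      obtain ⟨j, hj1, hjk, hjt⟩ := aux_ceil_index hT hk htIoc
      obtain ⟨hW1, hW2, hW3⟩ := hWval k hk t j hj1 hjk hjt
      rw [hW1, hW2, hW3]
      have htS₀ := (hS'G ht).1
      have hjh := hjhIcc k hk j hjk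
      have hzU : z k j ∈ U := by
        apply hρU
        rw [mem_thickening_iff]
        refine ⟨xb ((j : ℝ) * (T / (k : ℝ))), ⟨_, hjh, rfl⟩, ?_⟩
        rw [dist_comm]
        exact (hk3 j hj1 hjk).trans_le (min_le_right _ _)
      have hzmF : ‖(T / (k : ℝ))⁻¹ • (z k j - z k (j - 1))‖ ≤ mF := (hzincl k hk j hj1 hjk).2
      have habs_g : |f (z k j) ((T / (k : ℝ))⁻¹ • (z k j - z k (j - 1)))
          ((j : ℝ) * (T / (k : ℝ)))| ≤ Cf :=
        hCfb _ hzU _ (mem_closedBall_zero_iff.2 hzmF) _ hjh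
      have habs_ψ : |f (xb t) (xb' t) ((j : ℝ) * (T / (k : ℝ)))| ≤ Cf :=
        hCfb _ (hS₀U t htS₀) _ (hS₀mF t htS₀) _ hjh
      have hnn : (0:ℝ) ≤ c * ‖(T / (k : ℝ))⁻¹ • (z k j - z k (j - 1)) - xb' t‖ ^ 2 := by
        positivity
      have hIv := (aux_mem_Ioc_iff hT hk t j).2 hjt
      have hmul : ((j : ℝ) - 1) * (T / (k : ℝ)) = (j : ℝ) * (T / (k : ℝ)) - T / (k : ℝ) := by
        ring
      have hjht : (j : ℝ) * (T / (k : ℝ)) - t < ν := by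
        have := hIv.1
        rw [hmul] at this
        linarith
      by_cases hcase : ‖(T / (k : ℝ))⁻¹ • (z k j - z k (j - 1)) - xb' t‖ < δ
      · have hxdist : ‖z k j - xb t‖ < δ / 2 := by
          have l1 : dist (z k j) (xb ((j : ℝ) * (T / (k : ℝ)))) < δ / 4 := by
            rw [dist_comm]
            exact (hk3 j hj1 hjk).trans_le (min_le_left _ _)
          have l2 : ‖xb ((j : ℝ) * (T / (k : ℝ))) - xb t‖ ≤
              C1 * |(j : ℝ) * (T / (k : ℝ)) - t| := hxbLip t ⟨htIoc.1.le, htIoc.2⟩ _ hjh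
          have l3 : |(j : ℝ) * (T / (k : ℝ)) - t| ≤ T / (k : ℝ) := by
            rw [abs_of_nonneg (by linarith [hIv.2])]
            have := hIv.1
            rw [hmul] at this
            linarith
          have l4 : C1 * |(j : ℝ) * (T / (k : ℝ)) - t| ≤ δ / 4 := by
            calc C1 * |(j : ℝ) * (T / (k : ℝ)) - t| ≤ C1 * (δ / (4 * (C1 + 1))) := by
                  apply mul_le_mul_of_nonneg_left _ hC10
                  exact l3.trans hkδ.le
            _ ≤ δ / 4 := by
                have h1 : (0:ℝ) < 4 * (C1 + 1) := by positivity
                have h2 : C1 * (δ / (4 * (C1 + 1))) = (C1 * δ) / (4 * (C1 + 1)) := by ring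
                rw [h2, div_le_div_iff₀ h1 (by norm_num : (0:ℝ) < (4:ℝ))]
                nlinarith
          calc ‖z k j - xb t‖ = dist (z k j) (xb t) := (dist_eq_norm _ _).symm
          _ ≤ dist (z k j) (xb ((j : ℝ) * (T / (k : ℝ)))) +
              dist (xb ((j : ℝ) * (T / (k : ℝ)))) (xb t) := dist_triangle _ _ _
          _ < δ / 4 + δ / 4 := by
              apply add_lt_add_of_lt_of_le l1
              rw [dist_eq_norm]
              exact l2.trans l4
          _ = δ / 2 := by ring
        have hlt := hfδ ((j : ℝ) * (T / (k : ℝ))) hjh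
          (z k j, (T / (k : ℝ))⁻¹ • (z k j - z k (j - 1))) (xb t, xb' t)
          ⟨hzU, hzmF.trans (by linarith), (j : ℝ) * (T / (k : ℝ)),
            ⟨by linarith, le_rfl⟩, (hzincl k hk j hj1 hjk).1⟩
          ⟨hS₀U t htS₀, (hS₀n t htS₀).trans (by linarith), t,
            ⟨by linarith, hIv.2⟩, htS₀.2.1⟩
          (by
            rw [Prod.dist_eq, sup_lt_iff]
            constructor
            · show dist (z k j) (xb t) < δ
              rw [dist_eq_norm]
              exact hxdist.trans (by linarith)
            · show dist ((T / (k : ℝ))⁻¹ • (z k j - z k (j - 1))) (xb' t) < δ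
              rw [dist_eq_norm]
              exact hcase)
        linarith
      · push_neg at hcase
        have h2C : |f (z k j) ((T / (k : ℝ))⁻¹ • (z k j - z k (j - 1)))
            ((j : ℝ) * (T / (k : ℝ))) - f (xb t) (xb' t) ((j : ℝ) * (T / (k : ℝ)))| ≤
            2 * Cf := by
          have := abs_sub (f (z k j) ((T / (k : ℝ))⁻¹ • (z k j - z k (j - 1)))
              ((j : ℝ) * (T / (k : ℝ)))) (f (xb t) (xb' t) ((j : ℝ) * (T / (k : ℝ))))
          linarith
        have hsq : δ ^ 2 ≤ ‖(T / (k : ℝ))⁻¹ • (z k j - z k (j - 1)) - xb' t‖ ^ 2 :=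
          pow_le_pow_left₀ hδ.le hcase 2
        have hδ0 : δ ^ 2 ≠ 0 := by positivity
        have h8 : 8 * Cf ≤ c * ‖(T / (k : ℝ))⁻¹ • (z k j - z k (j - 1)) - xb' t‖ ^ 2 := by
          calc 8 * Cf = c * δ ^ 2 := by rw [hcdef, div_mul_cancel₀ _ hδ0]
          _ ≤ _ := mul_le_mul_of_nonneg_left hsq hc0
        linarith
    -- integrability facts
    have hWint' := hWint k hk
    have hψint' := hψint k hk hkν
    have hRHSint : Integrable (fun t => ε / (4 * (T + 1)) + c * ‖W k t - xb' t‖ ^ 2)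
        (volume.restrict (Ioc (0 : ℝ) T)) := (integrable_const _).add (hWint'.const_mul c)
    have hgψint : Integrable (fun t => |g k t - ψ k t|) (volume.restrict (Ioc (0 : ℝ) T)) :=
      ((hgint k).sub hψint').abs
    have hψφint : Integrable (fun t => |ψ k t - φ t|) (volume.restrict (Ioc (0 : ℝ) T)) :=
      (hψint'.sub hφint).abs
    have est1 : ∫ t in Ioc (0 : ℝ) T, |g k t - ψ k t| ≤ ε / (4 * (T + 1)) * T + c * Ek k := by
      calc ∫ t in Ioc (0 : ℝ) T, |g k t - ψ k t|
          ≤ ∫ t in Ioc (0 : ℝ) T, (ε / (4 * (T + 1)) + c * ‖W k t - xb' t‖ ^ 2) :=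
            integral_mono_ae hgψint hRHSint hptwise
      _ = ε / (4 * (T + 1)) * T + c * Ek k := by
          rw [integral_add (integrable_const _) (hWint'.const_mul c), integral_const,
            integral_const_mul, measureReal_def, Measure.restrict_apply_univ, Real.volume_Ioc, sub_zero,
            ENNReal.toReal_ofReal hT0, smul_eq_mul, hEkdef, mul_comm T]
    have est2 : |(∫ t in Ioc (0 : ℝ) T, g k t) - ∫ t in Ioc (0 : ℝ) T, φ t| ≤
        (∫ t in Ioc (0 : ℝ) T, |g k t - ψ k t|) + ∫ t in Ioc (0 : ℝ) T, |ψ k t - φ t| := by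
      rw [← integral_sub (hgint k) hφint]
      calc |∫ t in Ioc (0 : ℝ) T, (g k t - φ t)| ≤ ∫ t in Ioc (0 : ℝ) T, |g k t - φ t| := by
            have := norm_integral_le_integral_norm (μ := volume.restrict (Ioc (0 : ℝ) T))
              (f := fun t => g k t - φ t)
            simpa [Real.norm_eq_abs] using this
      _ ≤ ∫ t in Ioc (0 : ℝ) T, (|g k t - ψ k t| + |ψ k t - φ t|) := by
            apply integral_mono ((hgint k).sub hφint).abs (hgψint.add hψφint)
            intro t
            exact abs_sub_le _ _ _
      _ = _ := integral_add hgψint hψφint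
    have hTT : ε / (4 * (T + 1)) * T ≤ ε / 4 := by
      rw [div_mul_eq_mul_div, div_le_div_iff₀ (by positivity) (by norm_num)]
      nlinarith
    rw [Real.dist_eq, hBeq k hk]
    calc |(∫ t in Ioc (0 : ℝ) T, g k t) - ∫ t in Ioc (0 : ℝ) T, φ t| ≤
        (∫ t in Ioc (0 : ℝ) T, |g k t - ψ k t|) + ∫ t in Ioc (0 : ℝ) T, |ψ k t - φ t| := est2
    _ ≤ (ε / (4 * (T + 1)) * T + c * Ek k) + ∫ t in Ioc (0 : ℝ) T, |ψ k t - φ t| := by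
        linarith
    _ < ε / 4 + ε / 4 + ε / 4 := by linarith
    _ < ε := by linarith
  -- assemble
  rw [intervalIntegral.integral_of_le hT0]
  have htotal := (hA.add hB).add hCpart
  rw [add_zero] at htotal
  exact htotal

end
end
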